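/- Let G_1 be a graph on vertex set {1,…,m_1} and G_2 a graph on vertex set {m_1+1,…,m} where m = m_1 + m_2. Let K_{m_1} denote the complete graph on {1,…,m_1}, K_{m_2} the complete graph on {m_1+1,…,m}, and K_m the complete graph on [m]. Then F_{G_1 + K_{m_2}} ∪ F_{K_{m_1} + G_2} = F_{K_m}, i.e., a function f : [m] → ℤ_{≥0} satisfies conditions (i) and (ii) for D(K_m) if and only if it satisfies them for D(G_1 + K_{m_2}) or for D(K_{m_1} + G_2). -/

import Mathlib

open SimpleGraph Polynomial

namespace PQPaper

instance instFintypeLex {α : Type*} [h : Fintype α] : Fintype (Lex α) := h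

/-- The bipartite graph `D(G)` on `V ⊕ V`: edges `{i, ī}` for every vertex `i`,
and `{i, j̄}`, `{ī, j}` for every edge `{i, j}` of `G`. -/
def DG {V : Type*} (G : SimpleGraph V) : SimpleGraph (V ⊕ V) :=
  SimpleGraph.fromRel fun a b =>
    match a, b with
    | Sum.inl i, Sum.inr j => i = j ∨ G.Adj i j
    | _, _ => False

/-- `f : V → ℕ` is a hypertree of the bipartite graph `H` on `V ⊕ W`
(with hyperedge side `V`): `H` has a spanning tree whose degree at each
left vertex `v` is `f v + 1`. -/
def IsHypertree {V W : Type*} (H : SimpleGraph (V ⊕ W)) (f : V → ℕ) : Prop :=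
  ∃ T : SimpleGraph (V ⊕ W), T ≤ H ∧ T.IsTree ∧
    ∀ v : V, (T.neighborSet (Sum.inl v)).ncard = f v + 1

/-- The set of hypertrees of `H`. -/
def HT {V W : Type*} (H : SimpleGraph (V ⊕ W)) : Set (V → ℕ) :=
  {f | IsHypertree H f}

/-- The set of internally inactive hyperedges of a hypertree `f`. -/
def inactive {V W : Type*} [LT V] (H : SimpleGraph (V ⊕ W)) (f : V → ℕ) : Set V :=
  {j | ∃ j', j' < j ∧ ∃ g : V → ℕ,
    g j' = f j' + 1 ∧ (g j : ℤ) = (f j : ℤ) - 1 ∧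
    (∀ i, i ≠ j' → i ≠ j → g i = f i) ∧ IsHypertree H g}

/-- The interior polynomial `I_H(x) = Σ_{f ∈ HT(H)} x^{ῑ(f)}`. -/
noncomputable def interiorPoly {V W : Type*} [Fintype V] [LinearOrder V]
    (H : SimpleGraph (V ⊕ W)) : Polynomial ℤ :=
  ∑ k ∈ Finset.range (Fintype.card V + 1),
    Polynomial.C ({f | f ∈ HT H ∧ (inactive H f).ncard = k}.ncard : ℤ) * Polynomial.X ^ k

/-- The perfectly matchable sets of a graph: vertex sets of matchings of `H`. -/
def PMSets {V : Type*} (H : SimpleGraph V) : Set (Set V) :=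
  {S | ∃ M : H.Subgraph, M.IsMatching ∧ M.verts = S}

/-- The perfectly matchable set polynomial `p(H,x) = Σ_k |PM(H,k)| x^k`. -/
noncomputable def pmsPoly {V : Type*} [Fintype V] (H : SimpleGraph V) : Polynomial ℤ :=
  ∑ k ∈ Finset.range (Fintype.card V + 1),
    Polynomial.C ({S | S ∈ PMSets H ∧ S.ncard = 2 * k}.ncard : ℤ) * Polynomial.X ^ k

/-- Join of two vertex-disjoint graphs. -/
def sumJoin {V W : Type*} (G : SimpleGraph V) (H : SimpleGraph W) : SimpleGraph (V ⊕ W) where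
  Adj a b :=
    match a, b with
    | Sum.inl x, Sum.inl y => G.Adj x y
    | Sum.inr x, Sum.inr y => H.Adj x y
    | Sum.inl _, Sum.inr _ => True
    | Sum.inr _, Sum.inl _ => True
  symm := by
    constructor
    rintro (x | x) (y | y) h
    · exact G.symm.symm _ _ h
    · exact trivial
    · exact trivial
    · exact H.symm.symm _ _ h
  loopless := by
    constructor
    rintro (x | x) h
    · exact G.loopless.irrefl x h
    · exact H.loopless.irrefl x h

/-- Join of a family of pairwise vertex-disjoint graphs. -/
def sigmaJoin {ι : Type*} {V : ι → Type*} (G : ∀ i, SimpleGraph (V i)) :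
    SimpleGraph (Σ i, V i) :=
  SimpleGraph.fromRel fun a b =>
    a.1 ≠ b.1 ∨ ∃ (i : ι) (x y : V i), a = ⟨i, x⟩ ∧ b = ⟨i, y⟩ ∧ (G i).Adj x y

/-- A copy of a graph on the lexicographic type synonym of its vertex type. -/
def lexify {α : Type*} (G : SimpleGraph α) : SimpleGraph (Lex α) :=
  G.map toLex.toEmbedding

/-- The polynomial
`f_{ℓ,m}(x) = Σ_{k=0}^{ℓ+m−1} Σ_{α=0}^{k} C(ℓ−1,k−α) C(m,α) Σ_{β=α}^{k} C(ℓ+α−1,β) C(m−α,k−β) x^k`. -/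
noncomputable def fPoly (l m : ℕ) : Polynomial ℤ :=
  ∑ k ∈ Finset.range (l + m),
    Polynomial.C (∑ a ∈ Finset.range (k + 1),
      ((l - 1).choose (k - a) : ℤ) * (m.choose a : ℤ) *
        ∑ b ∈ Finset.Icc a k, ((l + a - 1).choose b : ℤ) * ((m - a).choose (k - b) : ℤ)) *
      Polynomial.X ^ k

/-- The cycle graph on `n` vertices. -/
def cycG (n : ℕ) : SimpleGraph (Fin n) :=
  SimpleGraph.fromRel fun a b =>
    (b : ℕ) = (a : ℕ) + 1 ∨ ((a : ℕ) = n - 1 ∧ (b : ℕ) = 0)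

/-- `Γ(V')`: the set of neighbours in `D(H)` of the left vertices in `V'`,
viewed as a subset of the right copy `[m̄]`. -/
def Gam {m : ℕ} (H : SimpleGraph (Fin m)) (V' : Set (Fin m)) : Set (Fin m) :=
  {j | ∃ i ∈ V', (DG H).Adj (Sum.inl i) (Sum.inr j)}

/-- Condition (ii): `Σ_{i ∈ V'} f(i) ≤ |Γ(V')| − 1` for every nonempty `V' ⊆ [m]`. -/
def cond2 {m : ℕ} (H : SimpleGraph (Fin m)) (f : Fin m → ℕ) : Prop :=
  ∀ V' : Finset (Fin m), V'.Nonempty →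
    (∑ i ∈ V', f i) + 1 ≤ (Gam H (V' : Set (Fin m))).ncard

/-- `F_H`: functions satisfying conditions (i) and (ii) for `D(H)`. -/
def FSet {m : ℕ} (H : SimpleGraph (Fin m)) : Set (Fin m → ℕ) :=
  {f | (∑ i, f i) = m - 1 ∧ cond2 H f}

/-- `η_H(f)`: indices `j` admitting `j' < j` such that the transfer of one unit
from `j` to `j'` again satisfies condition (ii). -/
def eta {m : ℕ} (H : SimpleGraph (Fin m)) (f : Fin m → ℕ) : Set (Fin m) :=
  {j | ∃ j', j' < j ∧ ∃ g : Fin m → ℕ,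
    g j' = f j' + 1 ∧ (g j : ℤ) = (f j : ℤ) - 1 ∧
    (∀ i, i ≠ j' → i ≠ j → g i = f i) ∧ cond2 H g}

/-- `F_H(k) = {f ∈ F_H : |η_H(f)| = k}`. -/
def FSetK {m : ℕ} (H : SimpleGraph (Fin m)) (k : ℕ) : Set (Fin m → ℕ) :=
  {f | f ∈ FSet H ∧ (eta H f).ncard = k}

/-- All edges between `{1,…,m1}` and `{m1+1,…,m}` in `Fin m`. -/
def crossGraph (m m1 : ℕ) : SimpleGraph (Fin m) :=
  SimpleGraph.fromRel fun a b => (a : ℕ) < m1 ∧ m1 ≤ (b : ℕ)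

/-- The complete graph on the first `m1` vertices of `Fin m`. -/
def leftComplete (m m1 : ℕ) : SimpleGraph (Fin m) :=
  SimpleGraph.fromRel fun a b => (a : ℕ) < m1 ∧ (b : ℕ) < m1

/-- The complete graph on the last `m − m1` vertices of `Fin m`. -/
def rightComplete (m m1 : ℕ) : SimpleGraph (Fin m) :=
  SimpleGraph.fromRel fun a b => m1 ≤ (a : ℕ) ∧ m1 ≤ (b : ℕ)

/-- The tilde construction: a bipartite graph `H` on `V ⊕ W` together with two
new vertices `u = inr 0` and `w = inr 1`, where `u` is joined to all of `V` and
`w` is joined to all of `W` and to `u`. -/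
def tilde {V W : Type*} (H : SimpleGraph (V ⊕ W)) : SimpleGraph ((V ⊕ W) ⊕ Fin 2) :=
  SimpleGraph.fromRel fun a b =>
    (∃ x y, a = Sum.inl x ∧ b = Sum.inl y ∧ H.Adj x y) ∨
    (∃ i : V, a = Sum.inl (Sum.inl i) ∧ b = Sum.inr 0) ∨
    (∃ j : W, a = Sum.inl (Sum.inr j) ∧ b = Sum.inr 1) ∨
    (a = Sum.inr 0 ∧ b = Sum.inr 1)

/-!
If a vertex of `V'` is adjacent in `H` to every other vertex, then `Γ(V')` is all of `[m̄]`, and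
condition (ii) holds at `V'` for any `f` with `Σ f = m − 1`. In `G₁ + K_{m₂}` every right vertex is
such a vertex, in `K_{m₁} + G₂` every left vertex is. So a set `A` violating (ii) for the first graph
lies on the left, and since `Γ(A) ⊇ A ∪ R` it carries `Σ_A f ≥ |A| + |R|`; symmetrically a violator
`B` for the second graph lies on the right with `Σ_B f ≥ |B| + |L|`. As `A` and `B` are disjoint,
`m − 1 ≥ Σ_A f + Σ_B f ≥ |L| + |R| + 2 = m + 2`, which is absurd.
-/

@[simp]
lemma DG_adj_inl_inr {V : Type*} (H : SimpleGraph V) (i j : V) :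
    (DG H).Adj (Sum.inl i) (Sum.inr j) ↔ i = j ∨ H.Adj i j := by
  simp [DG]

section Gam

variable {m : ℕ}

lemma Gam_mono {H H' : SimpleGraph (Fin m)} (h : H ≤ H') (V' : Set (Fin m)) :
    Gam H V' ⊆ Gam H' V' := by
  rintro j ⟨i, hi, hadj⟩
  rw [DG_adj_inl_inr] at hadj
  exact ⟨i, hi, by rw [DG_adj_inl_inr]; exact hadj.imp_right (@h _ _)⟩

lemma subset_Gam (H : SimpleGraph (Fin m)) (V' : Set (Fin m)) : V' ⊆ Gam H V' :=
  fun j hj => ⟨j, hj, by simp⟩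

lemma neighborSet_subset_Gam (H : SimpleGraph (Fin m)) {V' : Set (Fin m)} {i : Fin m}
    (hi : i ∈ V') : H.neighborSet i ⊆ Gam H V' :=
  fun j hj => ⟨i, hi, by simpa using Or.inr hj⟩

lemma Gam_eq_univ_of_mem {H : SimpleGraph (Fin m)} {V' : Set (Fin m)} {i : Fin m}
    (hi : i ∈ V') (huniv : ∀ j, j ≠ i → H.Adj i j) : Gam H V' = Set.univ :=
  Set.eq_univ_of_forall fun j => ⟨i, hi, by
    rw [DG_adj_inl_inr]
    exact (eq_or_ne j i).imp Eq.symm (huniv j)⟩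

lemma cond2_mono {H H' : SimpleGraph (Fin m)} (h : H ≤ H') {f : Fin m → ℕ}
    (hf : cond2 H f) : cond2 H' f := fun V' hV' =>
  (hf V' hV').trans (Set.ncard_le_ncard (Gam_mono h _))

lemma FSet_mono {H H' : SimpleGraph (Fin m)} (h : H ≤ H') : FSet H ⊆ FSet H' :=
  fun _ ⟨hsum, hf⟩ => ⟨hsum, cond2_mono h hf⟩

end Gam

section Violator

variable {m : ℕ} {H : SimpleGraph (Fin m)} {S A : Finset (Fin m)} {f : Fin m → ℕ}

lemma subset_of_ncard_Gam_lt (huniv : ∀ i ∉ S, ∀ j, j ≠ i → H.Adj i j)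
    (hsum : ∑ i, f i = m - 1) (hA : (Gam H A).ncard < ∑ i ∈ A, f i + 1) : A ⊆ S := by
  intro i hiA
  by_contra hiS
  have hA_le : ∑ i ∈ A, f i ≤ m - 1 := hsum ▸ Finset.sum_le_sum_of_subset A.subset_univ
  rw [Gam_eq_univ_of_mem (Finset.mem_coe.2 hiA) (huniv i hiS), Set.ncard_univ,
    Nat.card_eq_fintype_card, Fintype.card_fin] at hA
  have : 0 < m := i.pos
  omega

lemma card_add_card_compl_le_ncard_Gam (huniv : ∀ i ∉ S, ∀ j, j ≠ i → H.Adj i j)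
    (hAS : A ⊆ S) (hA : A.Nonempty) : A.card + Sᶜ.card ≤ (Gam H A).ncard := by
  obtain ⟨a, ha⟩ := hA
  have hdisj : Disjoint A Sᶜ := disjoint_compl_right.mono_left hAS
  have hsub : ((A ∪ Sᶜ : Finset (Fin m)) : Set (Fin m)) ⊆ Gam H A := by
    rw [Finset.coe_union]
    refine Set.union_subset (subset_Gam H _) fun j hj => neighborSet_subset_Gam H
      (Finset.mem_coe.2 ha) (huniv j (Finset.mem_compl.1 hj) a ?_).symm
    rintro rfl
    exact Finset.mem_compl.1 hj (hAS ha)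
  rw [← Finset.card_union_of_disjoint hdisj, ← Set.ncard_coe_finset]
  exact Set.ncard_le_ncard hsub

end Violator

theorem cond2_or_cond2_of_sum_eq {m : ℕ} {H H' : SimpleGraph (Fin m)} (S : Finset (Fin m))
    (huniv : ∀ i ∉ S, ∀ j, j ≠ i → H.Adj i j) (huniv' : ∀ i ∈ S, ∀ j, j ≠ i → H'.Adj i j)
    {f : Fin m → ℕ} (hsum : ∑ i, f i = m - 1) : cond2 H f ∨ cond2 H' f := by
  by_contra! ⟨hH, hH'⟩
  simp only [cond2, not_forall, not_le, exists_prop] at hH hH'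
  obtain ⟨A, hA, hAviol⟩ := hH
  obtain ⟨B, hB, hBviol⟩ := hH'
  have huniv'' : ∀ i ∉ Sᶜ, ∀ j, j ≠ i → H'.Adj i j := fun i hi =>
    huniv' i (by simpa using hi)
  have hAS := subset_of_ncard_Gam_lt huniv hsum hAviol
  have hBS := subset_of_ncard_Gam_lt huniv'' hsum hBviol
  have hA_large := card_add_card_compl_le_ncard_Gam huniv hAS hA
  have hB_large := card_add_card_compl_le_ncard_Gam huniv'' hBS hB
  have hAB : ∑ i ∈ A, f i + ∑ i ∈ B, f i ≤ m - 1 := by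
    rw [← Finset.sum_union ((disjoint_compl_right.mono_right hBS).mono_left hAS),
      ← hsum]
    exact Finset.sum_le_sum_of_subset (Finset.subset_univ _)
  have hS : Sᶜ.card + Sᶜᶜ.card = m := by
    rw [compl_compl, add_comm, Finset.card_add_card_compl, Fintype.card_fin]
  have := hA.card_pos
  have := hB.card_pos
  omega

section Joins

variable {m m1 : ℕ} {i j : Fin m}

lemma sup_rightComplete_sup_crossGraph_adj (G : SimpleGraph (Fin m)) (hi : m1 ≤ (i : ℕ))
    (hji : j ≠ i) : (G ⊔ rightComplete m m1 ⊔ crossGraph m m1).Adj i j := by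
  simp only [sup_adj, rightComplete, crossGraph, fromRel_adj, ne_eq]
  omega

lemma leftComplete_sup_sup_crossGraph_adj (G : SimpleGraph (Fin m)) (hi : (i : ℕ) < m1)
    (hji : j ≠ i) : (leftComplete m m1 ⊔ G ⊔ crossGraph m m1).Adj i j := by
  simp only [sup_adj, leftComplete, crossGraph, fromRel_adj, ne_eq]
  omega

end Joins

theorem FSet_join_union_general (m1 m : ℕ)
    (G1 G2 : SimpleGraph (Fin m)) :
    FSet (G1 ⊔ rightComplete m m1 ⊔ crossGraph m m1) ∪
        FSet (leftComplete m m1 ⊔ G2 ⊔ crossGraph m m1) =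
      FSet (⊤ : SimpleGraph (Fin m)) := by
  refine (Set.union_subset (FSet_mono le_top) (FSet_mono le_top)).antisymm ?_
  rintro f ⟨hsum, -⟩
  let L : Finset (Fin m) := {i | (i : ℕ) < m1}
  refine (cond2_or_cond2_of_sum_eq L (fun i hi _ => ?_) (fun i hi _ => ?_) hsum).imp
    (⟨hsum, ·⟩) (⟨hsum, ·⟩)
  · exact sup_rightComplete_sup_crossGraph_adj G1 (by simpa [L] using hi)
  · exact leftComplete_sup_sup_crossGraph_adj G2 (by simpa [L] using hi)

/-- For `G₁` supported on `{1,…,m₁}` and `G₂` supported on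
`{m₁+1,…,m}` with `m = m₁ + m₂`, one has `F_{G₁+K_{m₂}} ∪ F_{K_{m₁}+G₂} = F_{K_m}`. -/
theorem FSet_join_union (m1 m2 m : ℕ) (hm : m = m1 + m2)
    (G1 G2 : SimpleGraph (Fin m))
    (hG1 : ∀ i j, G1.Adj i j → (i : ℕ) < m1 ∧ (j : ℕ) < m1)
    (hG2 : ∀ i j, G2.Adj i j → m1 ≤ (i : ℕ) ∧ m1 ≤ (j : ℕ)) :
    FSet (G1 ⊔ rightComplete m m1 ⊔ crossGraph m m1) ∪
        FSet (leftComplete m m1 ⊔ G2 ⊔ crossGraph m m1) =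
      FSet (⊤ : SimpleGraph (Fin m)) :=
  FSet_join_union_general m1 m G1 G2

end PQPaper
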